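/- Let B, C be symmetric positive definite d×d matrices and (α_k) a positive decreasing sequence with α_k → 0 and ∑ α_k = ∞. Set A_k = I - α_k BC and Π_n = A_n ⋯ A_1. Then the spectral norm ρ(Π_n) → 0 as n → ∞. -/

import Mathlib

/-!
With `S = B^{1/2}`, the matrix `M = S⁻¹ (B C) S = S C S` is symmetric positive definite, hence
coercive: `⟪M x, x⟫ ≥ μ ‖x‖²` for some `μ > 0`. Conjugating by `S` turns `Π_n` into
`Q_n = (I - α_n M) ⋯ (I - α_1 M)`. Once `α_k ‖M‖² ≤ μ`, expanding `‖x - α_k M x‖²` gives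
`‖I - α_k M‖ ≤ exp (-α_k μ / 2)`, so `‖Q_n‖ ≤ const · exp (-(μ / 2) ∑_{k ≤ n} α_k) → 0`, and
conjugating back only costs the factor `‖S‖ ‖S⁻¹‖`.
-/

open Filter Topology Real
open scoped RealInnerProductSpace ComplexOrder MatrixOrder

lemma tendsto_zero_of_succ_le_exp_neg_mul {u β : ℕ → ℝ} {N : ℕ} (hu : ∀ n, 0 ≤ u n)
    (hstep : ∀ n ≥ N, u (n + 1) ≤ exp (-β (n + 1)) * u n)
    (hβ : Tendsto (fun n => ∑ k ∈ Finset.Icc 1 n, β k) atTop atTop) :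
    Tendsto u atTop (𝓝 0) := by
  set s := fun n => ∑ k ∈ Finset.Icc 1 n, β k
  have hanti : ∀ n ≥ N, u n * exp (s n) ≤ u N * exp (s N) := by
    intro n hn
    induction n, hn using Nat.le_induction with
    | base => rfl
    | succ n hn ih =>
      have hstep' : u (n + 1) * exp (β (n + 1)) ≤ u n := by
        have := hstep n hn
        rwa [exp_neg, inv_mul_eq_div, le_div_iff₀ (exp_pos _)] at this
      calc u (n + 1) * exp (s (n + 1)) = u (n + 1) * exp (β (n + 1)) * exp (s n) := by
            simp only [s]; rw [Finset.sum_Icc_succ_top (by omega), exp_add]; ring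
        _ ≤ u n * exp (s n) := by gcongr
        _ ≤ u N * exp (s N) := ih
  have hbound : ∀ n ≥ N, u n ≤ u N * exp (s N) * exp (-s n) := fun n hn => by
    rw [exp_neg, ← div_eq_mul_inv, le_div_iff₀ (exp_pos _)]
    exact hanti n hn
  have hlim : Tendsto (fun n => u N * exp (s N) * exp (-s n)) atTop (𝓝 0) := by
    simpa using
      (tendsto_exp_atBot.comp (tendsto_neg_atTop_atBot.comp hβ)).const_mul (u N * exp (s N))
  exact squeeze_zero' (Eventually.of_forall hu) (eventually_atTop.2 ⟨N, hbound⟩) hlim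

section InnerProductSpace

variable {E : Type*} [NormedAddCommGroup E] [InnerProductSpace ℝ E]

lemma ContinuousLinearMap.exists_pos_mul_norm_sq_le_inner [FiniteDimensional ℝ E]
    (T : E →L[ℝ] E) (hT : ∀ x ≠ 0, 0 < ⟪T x, x⟫) :
    ∃ μ > 0, ∀ x, μ * ‖x‖ ^ 2 ≤ ⟪T x, x⟫ := by
  rcases subsingleton_or_nontrivial E with hE | hE
  · exact ⟨1, one_pos, fun x => by simp [Subsingleton.elim x 0]⟩
  obtain ⟨x₀, hx₀, hmin⟩ := (isCompact_sphere (0 : E) 1).exists_isMinOn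
    (NormedSpace.sphere_nonempty.2 zero_le_one)
    (by fun_prop : Continuous fun x => ⟪T x, x⟫).continuousOn
  refine ⟨⟪T x₀, x₀⟫, hT x₀ (ne_zero_of_mem_unit_sphere ⟨x₀, hx₀⟩), fun x => ?_⟩
  rcases eq_or_ne x 0 with rfl | hx
  · simp
  have hx' : ‖x‖ ≠ 0 := norm_ne_zero_iff.2 hx
  have := hmin (a := ‖x‖⁻¹ • x) (by simp [norm_smul, hx'])
  simp only [Set.mem_ofPred_eq, map_smul, real_inner_smul_left, real_inner_smul_right] at this
  calc ⟪T x₀, x₀⟫ * ‖x‖ ^ 2 ≤ ‖x‖⁻¹ * (‖x‖⁻¹ * ⟪T x, x⟫) * ‖x‖ ^ 2 := by gcongr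
    _ = ⟪T x, x⟫ := by field_simp

lemma ContinuousLinearMap.norm_one_sub_smul_le_exp {T : E →L[ℝ] E} {μ a : ℝ}
    (hT : ∀ x, μ * ‖x‖ ^ 2 ≤ ⟪T x, x⟫) (ha : 0 ≤ a) (haT : a * ‖T‖ ^ 2 ≤ μ) :
    ‖1 - a • T‖ ≤ exp (-(a * μ / 2)) := by
  refine ContinuousLinearMap.opNorm_le_bound _ (exp_pos _).le fun x => ?_
  have hTx : ‖T x‖ ^ 2 ≤ ‖T‖ ^ 2 * ‖x‖ ^ 2 := by
    rw [← mul_pow]; exact pow_le_pow_left₀ (norm_nonneg _) (T.le_opNorm x) 2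
  have hsq : ‖x - a • T x‖ ^ 2 ≤ (1 - a * μ) * ‖x‖ ^ 2 := by
    rw [norm_sub_sq_real, inner_smul_right, norm_smul, real_inner_comm, mul_pow,
      Real.norm_of_nonneg ha]
    nlinarith [mul_le_mul_of_nonneg_left (hT x) ha, mul_le_mul_of_nonneg_left hTx (sq_nonneg a),
      mul_le_mul_of_nonneg_right (mul_le_mul_of_nonneg_left haT ha) (sq_nonneg ‖x‖)]
  have hexp : 1 - a * μ ≤ exp (-(a * μ / 2)) ^ 2 := by
    rw [← exp_nat_mul, show ((2 : ℕ) : ℝ) * -(a * μ / 2) = -(a * μ) by push_cast; ring]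
    linarith [add_one_le_exp (-(a * μ))]
  refine le_of_pow_le_pow_left₀ two_ne_zero (by positivity) ?_
  simpa [mul_pow] using hsq.trans (mul_le_mul_of_nonneg_right hexp (sq_nonneg _))

lemma ContinuousLinearMap.tendsto_norm_zero_of_succ_eq_one_sub_smul_mul {T : E →L[ℝ] E} {μ : ℝ}
    (hμ : 0 < μ) (hT : ∀ x, μ * ‖x‖ ^ 2 ≤ ⟪T x, x⟫) {α : ℕ → ℝ} (hα : ∀ k, 0 ≤ α k)
    (hα0 : Tendsto α atTop (𝓝 0))
    (hdiv : Tendsto (fun n => ∑ k ∈ Finset.Icc 1 n, α k) atTop atTop) {Q : ℕ → E →L[ℝ] E}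
    (hQ : ∀ n, Q (n + 1) = (1 - α (n + 1) • T) * Q n) :
    Tendsto (‖Q ·‖) atTop (𝓝 0) := by
  obtain ⟨N, hN⟩ := eventually_atTop.1 <|
    (by simpa using hα0.mul_const (‖T‖ ^ 2) : Tendsto (α · * ‖T‖ ^ 2) atTop (𝓝 0)).eventually
      (ge_mem_nhds hμ)
  refine tendsto_zero_of_succ_le_exp_neg_mul (β := fun k => α k * μ / 2) (N := N)
    (fun _ => norm_nonneg _) (fun n hn => ?_) ?_
  · rw [hQ]
    exact (norm_mul_le _ _).trans <| mul_le_mul_of_nonneg_right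
      (norm_one_sub_smul_le_exp hT (hα _) (hN _ (by omega))) (norm_nonneg _)
  · simpa [mul_div_assoc, ← Finset.sum_mul] using hdiv.atTop_mul_const (by positivity : 0 < μ / 2)

end InnerProductSpace

namespace Matrix

variable {n : Type*} [Fintype n] [DecidableEq n]

lemma PosDef.inner_toEuclideanCLM_self_pos {M : Matrix n n ℝ} (hM : M.PosDef)
    {x : EuclideanSpace ℝ n} (hx : x ≠ 0) : 0 < ⟪toEuclideanCLM (𝕜 := ℝ) M x, x⟫ := by
  rw [real_inner_comm, inner_toEuclideanCLM]
  simpa using hM.dotProduct_mulVec_pos (x := x.ofLp) (by simpa using hx)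

variable {𝕜 : Type*} [RCLike 𝕜]

lemma PosDef.exists_isUnit_and_posDef_inv_mul_mul {B C : Matrix n n 𝕜} (hB : B.PosDef)
    (hC : C.PosDef) : ∃ S : Matrix n n 𝕜, IsUnit S ∧ (S⁻¹ * (B * C) * S).PosDef := by
  set S := CFC.sqrt B
  have hS : S.PosDef :=
    isStrictlyPositive_iff_posDef.1 (IsStrictlyPositive.sqrt B hB.isStrictlyPositive)
  have hSdet : IsUnit S.det := (isUnit_iff_isUnit_det S).1 hS.isUnit
  have hconj : S⁻¹ * (B * C) * S = star S * C * S := by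
    rw [← CFC.sqrt_mul_sqrt_self B hB.posSemidef.nonneg, star_eq_conjTranspose, hS.isHermitian.eq,
      Matrix.mul_assoc S S C, nonsing_inv_mul_cancel_left _ _ hSdet]
  refine ⟨S, hS.isUnit, ?_⟩
  rw [hconj]
  exact (IsUnit.posDef_star_left_conjugate_iff hS.isUnit).2 hC

end Matrix

theorem stmt8_general {d : ℕ} (B C : Matrix (Fin d) (Fin d) ℝ) (hB : B.PosDef) (hC : C.PosDef)
    (α : ℕ → ℝ) (hpos : ∀ k, 0 < α k)
    (hα0 : Tendsto α atTop (nhds 0))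
    (hdiv : Tendsto (fun n => ∑ k ∈ Finset.Icc 1 n, α k) atTop atTop)
    (P : ℕ → Matrix (Fin d) (Fin d) ℝ)
    (hPrec : ∀ n, P (n + 1) = (1 - α (n + 1) • (B * C)) * P n) :
    Tendsto (fun n => ‖Matrix.toEuclideanCLM (𝕜 := ℝ) (P n)‖) atTop (nhds 0) := by
  set φ := Matrix.toEuclideanCLM (𝕜 := ℝ) (n := Fin d)
  obtain ⟨S, hS, hM⟩ := hB.exists_isUnit_and_posDef_inv_mul_mul hC
  have hSdet : IsUnit S.det := (S.isUnit_iff_isUnit_det).1 hS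
  set M := S⁻¹ * (B * C) * S
  set Q := fun n => S⁻¹ * P n * S
  have hQ : ∀ n, φ (Q (n + 1)) = (1 - α (n + 1) • φ M) * φ (Q n) := fun n => by
    have hQM : Q (n + 1) = (1 - α (n + 1) • M) * Q n := by
      simp [Q, M, hPrec, sub_mul, mul_sub, mul_assoc, Matrix.mul_nonsing_inv_cancel_left _ _ hSdet]
    rw [hQM, map_mul, map_sub, map_one, map_smul]
  obtain ⟨μ, hμ, hcoer⟩ :=
    (φ M).exists_pos_mul_norm_sq_le_inner fun x hx => hM.inner_toEuclideanCLM_self_pos hx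
  have hQ0 : Tendsto (fun n => ‖φ (Q n)‖) atTop (𝓝 0) :=
    ContinuousLinearMap.tendsto_norm_zero_of_succ_eq_one_sub_smul_mul hμ hcoer
      (fun k => (hpos k).le) hα0 hdiv hQ
  have hP : ∀ n, ‖φ (P n)‖ ≤ ‖φ S‖ * ‖φ (Q n)‖ * ‖φ S⁻¹‖ := fun n => by
    have hPQ : P n = S * Q n * S⁻¹ := by
      simp [Q, mul_assoc, Matrix.mul_nonsing_inv_cancel_left _ _ hSdet,
        Matrix.mul_nonsing_inv _ hSdet]
    rw [hPQ, map_mul, map_mul]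
    exact norm_mul₃_le
  exact squeeze_zero (fun _ => norm_nonneg _) hP
    (by simpa using (tendsto_const_nhds.mul hQ0).mul (tendsto_const_nhds (x := ‖φ S⁻¹‖)))

/-- Let `B, C` be symmetric positive definite, `(α_k)` positive decreasing with
`α_k → 0` and `∑ α_k = ∞`. With `A_k = I - α_k BC` and `Π_n = A_n ⋯ A_1`, the operator
norm of `Π_n` tends to `0`. -/
theorem stmt8 {d : ℕ} (B C : Matrix (Fin d) (Fin d) ℝ) (hB : B.PosDef) (hC : C.PosDef)
    (α : ℕ → ℝ) (hpos : ∀ k, 0 < α k) (hdec : ∀ k, α (k + 1) ≤ α k)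
    (hα0 : Tendsto α atTop (nhds 0))
    (hdiv : Tendsto (fun n => ∑ k ∈ Finset.Icc 1 n, α k) atTop atTop)
    (P : ℕ → Matrix (Fin d) (Fin d) ℝ) (hP0 : P 0 = 1)
    (hPrec : ∀ n, P (n + 1) = (1 - α (n + 1) • (B * C)) * P n) :
    Tendsto (fun n => ‖Matrix.toEuclideanCLM (𝕜 := ℝ) (P n)‖) atTop (nhds 0) :=
  stmt8_general B C hB hC α hpos hα0 hdiv P hPrec
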